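/- There is a natural number L₂ such that for every commutative ring R with 1 and every unit u ∈ R^*, one has {E12(x·(u⁴ − 1)) : x ∈ R} ⊆ B_{C(1)}(L₂). -/

import Mathlib

open Matrix

abbrev SL2 (R : Type*) [CommRing R] := Matrix.SpecialLinearGroup (Fin 2) R

/-- The elementary matrix with `x` in the upper-right entry. -/
def E12 {R : Type*} [CommRing R] (x : R) : SL2 R :=
  ⟨!![1, x; 0, 1], by simp [Matrix.det_fin_two_of]⟩

/-- The elementary matrix with `x` in the lower-left entry. -/
def E21 {R : Type*} [CommRing R] (x : R) : SL2 R :=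
  ⟨!![1, 0; x, 1], by simp [Matrix.det_fin_two_of]⟩

/-- The self-reproducing element `C(x) = E21(x) * E12(x)`. -/
def Csr {R : Type*} [CommRing R] (x : R) : SL2 R := E21 x * E12 x

/-- The set of conjugates of elements of `T` or of their inverses. -/
def conjSet {G : Type*} [Group G] (T : Set G) : Set G :=
  {g | ∃ A ∈ T, ∃ x : G, g = x⁻¹ * A * x ∨ g = x⁻¹ * A⁻¹ * x}

/-- `BT T k` is the set of products of at most `k` elements, each of which is conjugate to
some `A ∈ T` or its inverse; the empty product gives `1 ∈ BT T k`. -/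
def BT {G : Type*} [Group G] (T : Set G) (k : ℕ) : Set G :=
  {g | ∃ l : List G, l.length ≤ k ∧ (∀ a ∈ l, a ∈ conjSet T) ∧ l.prod = g}

/-!
`B_{C(1)}(k)` is closed under inversion and conjugation and `B(m) B(n) ⊆ B(m + n)`, so for any
`g, h` the double commutator `⁅⁅g, C(1)⁆, h⁆` lies in `B_{C(1)}(4)`. For a unit `u` there is an
explicit `g ∈ SL₂(R)` with `⁅g, C(1)⁆` upper triangular with diagonal `(u², u⁻²)`, and conjugating
`E12(x)` by such an upper triangular matrix gives `E12(u⁴ x)`, so that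
`⁅⁅g, C(1)⁆, E12(x)⁆ = E12(x (u⁴ - 1))`.
-/

open scoped commutatorElement

section Group

variable {G : Type*} [Group G] {T : Set G}

theorem subset_conjSet : T ⊆ conjSet T :=
  fun a ha => ⟨a, ha, 1, Or.inl (by group)⟩

theorem inv_mem_conjSet {a : G} (ha : a ∈ conjSet T) : a⁻¹ ∈ conjSet T := by
  obtain ⟨A, hA, x, rfl | rfl⟩ := ha
  · exact ⟨A, hA, x, Or.inr (by group)⟩
  · exact ⟨A, hA, x, Or.inl (by group)⟩

theorem conj_mem_conjSet {a : G} (ha : a ∈ conjSet T) (g : G) : g * a * g⁻¹ ∈ conjSet T := by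
  obtain ⟨A, hA, x, rfl | rfl⟩ := ha
  · exact ⟨A, hA, x * g⁻¹, Or.inl (by group)⟩
  · exact ⟨A, hA, x * g⁻¹, Or.inr (by group)⟩

theorem conjSet_subset_BT_one : conjSet T ⊆ BT T 1 :=
  fun a ha => ⟨[a], le_rfl, by simpa using ha, List.prod_singleton⟩

theorem mul_mem_BT {a b : G} {m n : ℕ} (ha : a ∈ BT T m) (hb : b ∈ BT T n) :
    a * b ∈ BT T (m + n) := by
  obtain ⟨l, hl, hlT, rfl⟩ := ha
  obtain ⟨l', hl', hl'T, rfl⟩ := hb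
  refine ⟨l ++ l', by simp only [List.length_append]; omega, ?_, List.prod_append⟩
  simpa only [List.mem_append, or_imp, forall_and] using ⟨hlT, hl'T⟩

theorem inv_mem_BT {a : G} {k : ℕ} (ha : a ∈ BT T k) : a⁻¹ ∈ BT T k := by
  obtain ⟨l, hl, hlT, rfl⟩ := ha
  refine ⟨(l.map (·⁻¹)).reverse, by simpa using hl, ?_, (List.prod_inv_reverse l).symm⟩
  simp only [List.mem_reverse, List.mem_map, forall_exists_index, and_imp]
  rintro _ a ha rfl
  exact inv_mem_conjSet (hlT a ha)

theorem conj_mem_BT {a : G} {k : ℕ} (ha : a ∈ BT T k) (g : G) : g * a * g⁻¹ ∈ BT T k := by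
  obtain ⟨l, hl, hlT, rfl⟩ := ha
  refine ⟨l.map (MulAut.conj g), by simpa using hl, ?_, (map_list_prod (MulAut.conj g) l).symm⟩
  simp only [List.mem_map, MulAut.conj_apply, forall_exists_index, and_imp]
  rintro _ a ha rfl
  exact conj_mem_conjSet (hlT a ha) g

theorem commutatorElement_mem_BT {a : G} {k : ℕ} (ha : a ∈ BT T k) (g : G) :
    ⁅a, g⁆ ∈ BT T (k + k) := by
  rw [show ⁅a, g⁆ = a * (g * a⁻¹ * g⁻¹) by group]
  exact mul_mem_BT ha (conj_mem_BT (inv_mem_BT ha) g)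

theorem commutatorElement_mem_BT_two {A : G} (hA : A ∈ T) (g : G) : ⁅g, A⁆ ∈ BT T 2 := by
  have hA' := subset_conjSet hA
  exact mul_mem_BT (conjSet_subset_BT_one (conj_mem_conjSet hA' g))
    (conjSet_subset_BT_one (inv_mem_conjSet hA'))

theorem commutatorElement_commutatorElement_mem_BT {A : G} (hA : A ∈ T) (g h : G) :
    ⁅⁅g, A⁆, h⁆ ∈ BT T 4 :=
  commutatorElement_mem_BT (commutatorElement_mem_BT_two hA g) h

end Group

section SL2

variable {R : Type*} [CommRing R]

@[simp]
theorem coe_E12 (x : R) : ((E12 x : SL2 R) : Matrix (Fin 2) (Fin 2) R) = !![1, x; 0, 1] := rfl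

@[simp]
theorem coe_E21 (x : R) : ((E21 x : SL2 R) : Matrix (Fin 2) (Fin 2) R) = !![1, 0; x, 1] := rfl

theorem coe_Csr_one : ((Csr 1 : SL2 R) : Matrix (Fin 2) (Fin 2) R) = !![1, 1; 1, 2] := by
  rw [Csr, Matrix.SpecialLinearGroup.coe_mul, coe_E12, coe_E21]
  norm_num

theorem E12_add (a b : R) : E12 (a + b) = E12 a * E12 b := by
  ext i j
  simp only [Matrix.SpecialLinearGroup.coe_mul, coe_E12]
  fin_cases i <;> fin_cases j <;> simp [add_comm]

theorem E12_zero : E12 (0 : R) = 1 := by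
  ext i j
  fin_cases i <;> fin_cases j <;> simp

theorem E12_neg (a : R) : E12 (-a) = (E12 a)⁻¹ :=
  eq_inv_of_mul_eq_one_left (by rw [← E12_add, neg_add_cancel, E12_zero])

theorem mul_E12_of_lowerLeft_eq_zero (Y : SL2 R) (hY : Y 1 0 = 0) (x : R) :
    Y * E12 x = E12 (Y 0 0 ^ 2 * x) * Y := by
  have hdet : Y 0 0 * Y 1 1 = 1 := by
    have := Y.det_coe
    rw [det_fin_two, hY] at this
    linear_combination this
  ext i j
  simp only [Matrix.SpecialLinearGroup.coe_mul, coe_E12]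
  fin_cases i <;> fin_cases j <;> simp [mul_apply, hY]
  linear_combination (-(Y 0 0 * x)) * hdet

theorem commutatorElement_E12_of_lowerLeft_eq_zero (Y : SL2 R) (hY : Y 1 0 = 0) (x : R) :
    ⁅Y, E12 x⁆ = E12 (x * (Y 0 0 ^ 2 - 1)) := by
  rw [commutatorElement_def, mul_E12_of_lowerLeft_eq_zero Y hY, mul_inv_cancel_right,
    mul_sub, mul_one, sub_eq_add_neg, E12_add, E12_neg, mul_comm]

def borelElement (u : Rˣ) : SL2 R :=
  ⟨!![u ^ 2, 3 - u ^ 2 - 2 * (↑u⁻¹ : R) ^ 2; 0, (↑u⁻¹ : R) ^ 2], by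
    rw [det_fin_two_of, mul_zero, sub_zero, ← mul_pow, Units.mul_inv, one_pow]⟩

theorem borelElement_apply_zero_zero (u : Rˣ) : borelElement u 0 0 = u ^ 2 := rfl

theorem borelElement_apply_one_zero (u : Rˣ) : borelElement u 1 0 = 0 := rfl

def borelWitness (u : Rˣ) : SL2 R :=
  ⟨!![3 * u - 2 * u⁻¹, 5 * u - 4 * u⁻¹; (↑u⁻¹ : R), 2 * u⁻¹], by
    rw [det_fin_two_of]; linear_combination u.mul_inv⟩

theorem commutatorElement_borelWitness_Csr_one (u : Rˣ) :
    ⁅borelWitness u, Csr 1⁆ = borelElement u := by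
  suffices h : borelWitness u * Csr 1 = borelElement u * Csr 1 * borelWitness u by
    rw [commutatorElement_def, h]; group
  ext i j
  simp only [Matrix.SpecialLinearGroup.coe_mul, coe_Csr_one]
  fin_cases i <;> fin_cases j <;> simp [borelWitness, borelElement, mul_apply]
  · linear_combination ((u : R) + 6 * ↑u⁻¹) * u.mul_inv
  · linear_combination (2 * (u : R) + 10 * ↑u⁻¹) * u.mul_inv
  · linear_combination (-3 * (↑u⁻¹ : R)) * u.mul_inv
  · linear_combination (-5 * (↑u⁻¹ : R)) * u.mul_inv

end SL2

theorem technical_thm2 :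
    ∃ L₂ : ℕ, ∀ (R : Type) [CommRing R], ∀ u : Rˣ, ∀ x : R,
      E12 (x * ((u : R) ^ 4 - 1)) ∈ BT {Csr (1 : R)} L₂ := by
  refine ⟨4, fun R _ u x => ?_⟩
  have hE12 : E12 (x * ((u : R) ^ 4 - 1)) = ⁅⁅borelWitness u, Csr (1 : R)⁆, E12 x⁆ := by
    rw [commutatorElement_borelWitness_Csr_one,
      commutatorElement_E12_of_lowerLeft_eq_zero _ (borelElement_apply_one_zero u),
      borelElement_apply_zero_zero, ← pow_mul]
  rw [hE12]
  exact commutatorElement_commutatorElement_mem_BT (Set.mem_singleton _) _ _
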